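/- Under the assumptions on φ, φ₁, φ₂, and if ‖φ‖(‖φ₁‖ - φ₁(0) + ‖φ₂‖) < 1/2, then the functional equation f(x) = φ(x)f(φ₁(x)) + (1 - φ(x))f(φ₂(x)) has a unique solution f* in D^{0,1}[0,1]. -/

import Mathlib

/-- The optimal Lipschitz constant of `f` on `[0,1]`. -/
noncomputable def lipConst (f : ℝ → ℝ) : ℝ :=
  sInf {K : ℝ | 0 ≤ K ∧ ∀ x ∈ Set.Icc (0:ℝ) 1, ∀ y ∈ Set.Icc (0:ℝ) 1,
    |f x - f y| ≤ K * |x - y|}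

/-- The norm of the Lipschitz space `H₁[0,1]`: `‖f‖ = |f 0| + Lip f`. -/
noncomputable def normH (f : ℝ → ℝ) : ℝ := |f 0| + lipConst f

open Set Filter Topology Finset

private lemma lipConst_spec (f : ℝ → ℝ)
    (hf : ∃ K : ℝ, ∀ x ∈ Set.Icc (0:ℝ) 1, ∀ y ∈ Set.Icc (0:ℝ) 1, |f x - f y| ≤ K * |x - y|) :
    0 ≤ lipConst f ∧ ∀ x ∈ Set.Icc (0:ℝ) 1, ∀ y ∈ Set.Icc (0:ℝ) 1,
      |f x - f y| ≤ lipConst f * |x - y| := by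
  have hmem : lipConst f ∈ {K : ℝ | 0 ≤ K ∧ ∀ x ∈ Set.Icc (0:ℝ) 1, ∀ y ∈ Set.Icc (0:ℝ) 1,
      |f x - f y| ≤ K * |x - y|} := by
    apply IsClosed.csInf_mem
    · have heq : {K : ℝ | 0 ≤ K ∧ ∀ x ∈ Set.Icc (0:ℝ) 1, ∀ y ∈ Set.Icc (0:ℝ) 1,
          |f x - f y| ≤ K * |x - y|}
          = {K : ℝ | 0 ≤ K} ∩ ⋂ x ∈ Set.Icc (0:ℝ) 1, ⋂ y ∈ Set.Icc (0:ℝ) 1,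
              {K : ℝ | |f x - f y| ≤ K * |x - y|} := by
        ext K
        simp only [Set.mem_setOf_eq, Set.mem_inter_iff, Set.mem_iInter]
      rw [heq]
      refine (isClosed_le continuous_const continuous_id).inter ?_
      refine isClosed_biInter fun x hx => isClosed_biInter fun y hy => ?_
      exact isClosed_le continuous_const (continuous_id.mul continuous_const)
    · obtain ⟨K, hK⟩ := hf
      exact ⟨max K 0, le_max_right _ _, fun x hx y hy =>
        (hK x hx y hy).trans (mul_le_mul_of_nonneg_right (le_max_left _ _) (abs_nonneg _))⟩
    · exact ⟨0, fun K hK => hK.1⟩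
  exact hmem

private lemma lipConst_le' (f : ℝ → ℝ) (K : ℝ) (hK0 : 0 ≤ K)
    (hK : ∀ x ∈ Set.Icc (0:ℝ) 1, ∀ y ∈ Set.Icc (0:ℝ) 1, |f x - f y| ≤ K * |x - y|) :
    lipConst f ≤ K :=
  csInf_le ⟨0, fun b hb => hb.1⟩ ⟨hK0, hK⟩

theorem existence_uniqueness_general_equation
    (φ φ₁ φ₂ : ℝ → ℝ)
    (hφ : ∃ K : ℝ, ∀ x ∈ Set.Icc (0:ℝ) 1, ∀ y ∈ Set.Icc (0:ℝ) 1,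
      |φ x - φ y| ≤ K * |x - y|)
    (hφ0 : φ 0 = 0) (hφ1 : φ 1 = 1)
    (hφ₁maps : ∀ x ∈ Set.Icc (0:ℝ) 1, φ₁ x ∈ Set.Icc (0:ℝ) 1)
    (hφ₂maps : ∀ x ∈ Set.Icc (0:ℝ) 1, φ₂ x ∈ Set.Icc (0:ℝ) 1)
    (hφ₁ : ∃ K : ℝ, ∀ x ∈ Set.Icc (0:ℝ) 1, ∀ y ∈ Set.Icc (0:ℝ) 1,
      |φ₁ x - φ₁ y| ≤ K * |x - y|)
    (hφ₂ : ∃ K : ℝ, ∀ x ∈ Set.Icc (0:ℝ) 1, ∀ y ∈ Set.Icc (0:ℝ) 1,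
      |φ₂ x - φ₂ y| ≤ K * |x - y|)
    (hφ₁1 : φ₁ 1 = 1) (hφ₂0 : φ₂ 0 = 0)
    (hcontr : normH φ * (normH φ₁ - φ₁ 0 + normH φ₂) < 1 / 2) :
    ∃ f : ℝ → ℝ,
      ((∃ K : ℝ, ∀ x ∈ Set.Icc (0:ℝ) 1, ∀ y ∈ Set.Icc (0:ℝ) 1,
          |f x - f y| ≤ K * |x - y|) ∧ f 0 = 0 ∧ f 1 = 1 ∧
        ∀ x ∈ Set.Icc (0:ℝ) 1,
          f x = φ x * f (φ₁ x) + (1 - φ x) * f (φ₂ x)) ∧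
      ∀ g : ℝ → ℝ,
        ((∃ K : ℝ, ∀ x ∈ Set.Icc (0:ℝ) 1, ∀ y ∈ Set.Icc (0:ℝ) 1,
            |g x - g y| ≤ K * |x - y|) ∧ g 0 = 0 ∧ g 1 = 1 ∧
          ∀ x ∈ Set.Icc (0:ℝ) 1,
            g x = φ x * g (φ₁ x) + (1 - φ x) * g (φ₂ x)) →
        ∀ x ∈ Set.Icc (0:ℝ) 1, g x = f x := by
  classical
  obtain ⟨hKφ0, hKφ⟩ := lipConst_spec φ hφ
  obtain ⟨hK₁0, hK₁⟩ := lipConst_spec φ₁ hφ₁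
  obtain ⟨hK₂0, hK₂⟩ := lipConst_spec φ₂ hφ₂
  set Kφ := lipConst φ with hKφdef
  set K₁ := lipConst φ₁ with hK₁def
  set K₂ := lipConst φ₂ with hK₂def
  have h0mem : (0:ℝ) ∈ Set.Icc (0:ℝ) 1 := ⟨le_refl 0, zero_le_one⟩
  have h1mem : (1:ℝ) ∈ Set.Icc (0:ℝ) 1 := ⟨zero_le_one, le_refl 1⟩
  -- the contraction constant
  have hsum : Kφ * (K₁ + K₂) < 1/2 := by
    have h10 : φ₁ 0 ∈ Set.Icc (0:ℝ) 1 := hφ₁maps 0 h0mem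
    have h := hcontr
    simp only [normH] at h
    rw [hφ0, hφ₂0, abs_zero, abs_of_nonneg h10.1] at h
    calc Kφ * (K₁ + K₂) = (0 + Kφ) * (φ₁ 0 + K₁ - φ₁ 0 + (0 + K₂)) := by ring
      _ < 1/2 := h
  set c : ℝ := 2 * Kφ * (K₁ + K₂) with hcdef
  have hc0 : 0 ≤ c := by positivity
  have hc1 : c < 1 := by simp only [hcdef]; linarith
  -- pointwise bounds for φ
  have hφbd : ∀ x ∈ Set.Icc (0:ℝ) 1, |φ x| ≤ Kφ := by
    intro x hx
    have h := hKφ x hx 0 h0mem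
    rw [hφ0, sub_zero, sub_zero] at h
    refine h.trans ?_
    calc Kφ * |x| ≤ Kφ * 1 := by
          apply mul_le_mul_of_nonneg_left _ hKφ0
          rw [abs_of_nonneg hx.1]; exact hx.2
      _ = Kφ := mul_one _
  have hφbd' : ∀ x ∈ Set.Icc (0:ℝ) 1, |1 - φ x| ≤ Kφ := by
    intro x hx
    have h := hKφ 1 h1mem x hx
    rw [hφ1] at h
    refine h.trans ?_
    calc Kφ * |1 - x| ≤ Kφ * 1 := by
          apply mul_le_mul_of_nonneg_left _ hKφ0
          rw [abs_of_nonneg (by linarith [hx.2])]; linarith [hx.1]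
      _ = Kφ := mul_one _
  have hφ₁bd : ∀ y ∈ Set.Icc (0:ℝ) 1, |φ₁ y - 1| ≤ K₁ := by
    intro y hy
    have h := hK₁ y hy 1 h1mem
    rw [hφ₁1] at h
    refine h.trans ?_
    calc K₁ * |y - 1| ≤ K₁ * 1 := by
          apply mul_le_mul_of_nonneg_left _ hK₁0
          rw [abs_of_nonpos (by linarith [hy.2])]; linarith [hy.1]
      _ = K₁ := mul_one _
  have hφ₂bd : ∀ y ∈ Set.Icc (0:ℝ) 1, |(0:ℝ) - φ₂ y| ≤ K₂ := by
    intro y hy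
    have h := hK₂ 0 h0mem y hy
    rw [hφ₂0] at h
    refine h.trans ?_
    calc K₂ * |(0:ℝ) - y| ≤ K₂ * 1 := by
          apply mul_le_mul_of_nonneg_left _ hK₂0
          rw [abs_of_nonpos (by linarith [hy.1])]; linarith [hy.2]
      _ = K₂ := mul_one _
  -- the operator
  set T : (ℝ → ℝ) → (ℝ → ℝ) := fun f x => φ x * f (φ₁ x) + (1 - φ x) * f (φ₂ x) with hTdef
  have hT0 : ∀ f : ℝ → ℝ, T f 0 = f 0 := by
    intro f; simp only [hTdef, hφ0, hφ₂0, zero_mul, sub_zero, one_mul, zero_add]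
  have hT1 : ∀ f : ℝ → ℝ, T f 1 = f 1 := by
    intro f; simp only [hTdef, hφ1, hφ₁1, one_mul, sub_self, zero_mul, add_zero]
  -- the key contraction estimate
  have keyA : ∀ (f g : ℝ → ℝ) (L : ℝ), 0 ≤ L → f 0 = g 0 → f 1 = g 1 →
      (∀ x ∈ Set.Icc (0:ℝ) 1, ∀ y ∈ Set.Icc (0:ℝ) 1,
        |(f x - g x) - (f y - g y)| ≤ L * |x - y|) →
      ∀ x ∈ Set.Icc (0:ℝ) 1, ∀ y ∈ Set.Icc (0:ℝ) 1,
        |(T f x - T g x) - (T f y - T g y)| ≤ c * L * |x - y| := by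
    intro f g L hL h0 h1 hlip x hx y hy
    have hx1 := hφ₁maps x hx
    have hy1 := hφ₁maps y hy
    have hx2 := hφ₂maps x hx
    have hy2 := hφ₂maps y hy
    have e1 : (T f x - T g x) - (T f y - T g y)
        = φ x * ((f (φ₁ x) - g (φ₁ x)) - (f (φ₁ y) - g (φ₁ y)))
          + (φ x - φ y) * (((f (φ₁ y) - g (φ₁ y)) - (f 1 - g 1))
              + ((f 0 - g 0) - (f (φ₂ y) - g (φ₂ y))))
          + (1 - φ x) * ((f (φ₂ x) - g (φ₂ x)) - (f (φ₂ y) - g (φ₂ y))) := by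
      simp only [hTdef]
      rw [h0, h1]; ring
    rw [e1]
    have bA : |(f (φ₁ x) - g (φ₁ x)) - (f (φ₁ y) - g (φ₁ y))| ≤ L * (K₁ * |x - y|) :=
      (hlip _ hx1 _ hy1).trans (mul_le_mul_of_nonneg_left (hK₁ x hx y hy) hL)
    have bB : |(f (φ₁ y) - g (φ₁ y)) - (f 1 - g 1)| ≤ L * K₁ :=
      (hlip _ hy1 1 h1mem).trans (mul_le_mul_of_nonneg_left (hφ₁bd y hy) hL)
    have bC : |(f 0 - g 0) - (f (φ₂ y) - g (φ₂ y))| ≤ L * K₂ :=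
      (hlip 0 h0mem _ hy2).trans (mul_le_mul_of_nonneg_left (hφ₂bd y hy) hL)
    have bD : |(f (φ₂ x) - g (φ₂ x)) - (f (φ₂ y) - g (φ₂ y))| ≤ L * (K₂ * |x - y|) :=
      (hlip _ hx2 _ hy2).trans (mul_le_mul_of_nonneg_left (hK₂ x hx y hy) hL)
    have bφ : |φ x| ≤ Kφ := hφbd x hx
    have bφxy : |φ x - φ y| ≤ Kφ * |x - y| := hKφ x hx y hy
    have b1φ : |1 - φ x| ≤ Kφ := hφbd' x hx
    calc |φ x * ((f (φ₁ x) - g (φ₁ x)) - (f (φ₁ y) - g (φ₁ y)))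
          + (φ x - φ y) * (((f (φ₁ y) - g (φ₁ y)) - (f 1 - g 1))
              + ((f 0 - g 0) - (f (φ₂ y) - g (φ₂ y))))
          + (1 - φ x) * ((f (φ₂ x) - g (φ₂ x)) - (f (φ₂ y) - g (φ₂ y)))|
        ≤ |φ x * ((f (φ₁ x) - g (φ₁ x)) - (f (φ₁ y) - g (φ₁ y)))|
          + |(φ x - φ y) * (((f (φ₁ y) - g (φ₁ y)) - (f 1 - g 1))
              + ((f 0 - g 0) - (f (φ₂ y) - g (φ₂ y))))|
          + |(1 - φ x) * ((f (φ₂ x) - g (φ₂ x)) - (f (φ₂ y) - g (φ₂ y)))| :=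
        abs_add_three _ _ _
      _ ≤ Kφ * (L * (K₁ * |x - y|)) + (Kφ * |x - y|) * (L * K₁ + L * K₂)
          + Kφ * (L * (K₂ * |x - y|)) := by
        rw [abs_mul, abs_mul, abs_mul]
        refine add_le_add (add_le_add ?_ ?_) ?_
        · exact mul_le_mul bφ bA (abs_nonneg _) hKφ0
        · refine mul_le_mul bφxy ((abs_add_le _ _).trans (add_le_add bB bC)) (abs_nonneg _) ?_
          positivity
        · exact mul_le_mul b1φ bD (abs_nonneg _) hKφ0
      _ = c * L * |x - y| := by rw [hcdef]; ring
  -- the iteration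
  set fseq : ℕ → ℝ → ℝ := fun n => T^[n] (fun x => x) with hfseqdef
  have hiter : ∀ n, fseq (n+1) = T (fseq n) := by
    intro n; simp only [hfseqdef]; rw [Function.iterate_succ_apply']
  have hend0 : ∀ n, fseq n 0 = 0 := by
    intro n; induction n with
    | zero => simp [hfseqdef]
    | succ n ih => rw [hiter, hT0]; exact ih
  have hend1 : ∀ n, fseq n 1 = 1 := by
    intro n; induction n with
    | zero => simp [hfseqdef]
    | succ n ih => rw [hiter, hT1]; exact ih
  -- Lipschitz bound of the first difference
  set D : ℝ := Kφ * (K₁ + K₂ + 1) + 1 with hDdef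
  have hD0 : 0 ≤ D := by positivity
  have keyD : ∀ x ∈ Set.Icc (0:ℝ) 1, ∀ y ∈ Set.Icc (0:ℝ) 1,
      |(fseq 1 x - fseq 0 x) - (fseq 1 y - fseq 0 y)| ≤ D * |x - y| := by
    intro x hx y hy
    have hx1 := hφ₁maps x hx
    have hy1 := hφ₁maps y hy
    have hx2 := hφ₂maps x hx
    have hy2 := hφ₂maps y hy
    have e0 : fseq 0 = fun x : ℝ => x := rfl
    have e1 : fseq 1 = T (fun x : ℝ => x) := by rw [hiter 0, e0]
    have e : (fseq 1 x - fseq 0 x) - (fseq 1 y - fseq 0 y)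
        = φ x * (φ₁ x - φ₁ y) + (φ x - φ y) * (φ₁ y - φ₂ y)
          + (1 - φ x) * (φ₂ x - φ₂ y) - (x - y) := by
      rw [e0, e1]; simp only [hTdef]; ring
    rw [e]
    have b12 : |φ₁ y - φ₂ y| ≤ 1 := by
      rw [abs_sub_le_iff]
      constructor <;> linarith [hy1.1, hy1.2, hy2.1, hy2.2]
    have b1 : |φ x * (φ₁ x - φ₁ y)| ≤ Kφ * (K₁ * |x - y|) := by
      rw [abs_mul]
      exact mul_le_mul (hφbd x hx) (hK₁ x hx y hy) (abs_nonneg _) hKφ0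
    have b2 : |(φ x - φ y) * (φ₁ y - φ₂ y)| ≤ (Kφ * |x - y|) * 1 := by
      rw [abs_mul]
      exact mul_le_mul (hKφ x hx y hy) b12 (abs_nonneg _) (by positivity)
    have b3 : |(1 - φ x) * (φ₂ x - φ₂ y)| ≤ Kφ * (K₂ * |x - y|) := by
      rw [abs_mul]
      exact mul_le_mul (hφbd' x hx) (hK₂ x hx y hy) (abs_nonneg _) hKφ0
    calc |φ x * (φ₁ x - φ₁ y) + (φ x - φ y) * (φ₁ y - φ₂ y)
          + (1 - φ x) * (φ₂ x - φ₂ y) - (x - y)|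
        ≤ |φ x * (φ₁ x - φ₁ y) + (φ x - φ y) * (φ₁ y - φ₂ y)
            + (1 - φ x) * (φ₂ x - φ₂ y)| + |x - y| := abs_sub _ _
      _ ≤ (|φ x * (φ₁ x - φ₁ y)| + |(φ x - φ y) * (φ₁ y - φ₂ y)|
            + |(1 - φ x) * (φ₂ x - φ₂ y)|) + |x - y| :=
        add_le_add_left (abs_add_three _ _ _) _
      _ ≤ (Kφ * (K₁ * |x - y|) + (Kφ * |x - y|) * 1 + Kφ * (K₂ * |x - y|)) + |x - y| := by
        exact add_le_add_left (add_le_add (add_le_add b1 b2) b3) _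
      _ = D * |x - y| := by rw [hDdef]; ring
  -- difference Lipschitz bounds for all n
  have hdiff : ∀ n, ∀ x ∈ Set.Icc (0:ℝ) 1, ∀ y ∈ Set.Icc (0:ℝ) 1,
      |(fseq (n+1) x - fseq n x) - (fseq (n+1) y - fseq n y)| ≤ (c^n * D) * |x - y| := by
    intro n
    induction n with
    | zero =>
      intro x hx y hy
      simpa using keyD x hx y hy
    | succ n ih =>
      intro x hx y hy
      have h := keyA (fseq (n+1)) (fseq n) (c^n * D) (by positivity)
        (by rw [hend0, hend0]) (by rw [hend1, hend1]) ih x hx y hy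
      rw [← hiter, ← hiter] at h
      refine h.trans (le_of_eq ?_)
      ring
  -- pointwise bound of differences
  have hsup : ∀ n, ∀ x ∈ Set.Icc (0:ℝ) 1, |fseq (n+1) x - fseq n x| ≤ D * c^n := by
    intro n x hx
    have h := hdiff n x hx 0 h0mem
    rw [hend0, hend0, sub_zero, sub_zero, sub_zero] at h
    refine h.trans ?_
    have hxle : |x| ≤ 1 := by rw [abs_of_nonneg hx.1]; exact hx.2
    have h2 : c ^ n * D * |x| ≤ c ^ n * D * 1 :=
      mul_le_mul_of_nonneg_left hxle (by positivity)
    have h3 : c ^ n * D * 1 = D * c ^ n := by ring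
    linarith
  -- uniform Lipschitz bound
  have hLipSum : ∀ n, ∀ x ∈ Set.Icc (0:ℝ) 1, ∀ y ∈ Set.Icc (0:ℝ) 1,
      |fseq n x - fseq n y| ≤ (1 + D * ∑ k ∈ Finset.range n, c^k) * |x - y| := by
    intro n
    induction n with
    | zero =>
      intro x hx y hy
      simp [hfseqdef]
    | succ n ih =>
      intro x hx y hy
      have e : fseq (n+1) x - fseq (n+1) y
          = (fseq n x - fseq n y) + ((fseq (n+1) x - fseq n x) - (fseq (n+1) y - fseq n y)) := by
        ring
      rw [e]
      calc |(fseq n x - fseq n y) + ((fseq (n+1) x - fseq n x) - (fseq (n+1) y - fseq n y))|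
          ≤ |fseq n x - fseq n y| + |(fseq (n+1) x - fseq n x) - (fseq (n+1) y - fseq n y)| :=
          abs_add_le _ _
        _ ≤ (1 + D * ∑ k ∈ Finset.range n, c^k) * |x - y| + (c^n * D) * |x - y| :=
          add_le_add (ih x hx y hy) (hdiff n x hx y hy)
        _ = (1 + D * ∑ k ∈ Finset.range (n+1), c^k) * |x - y| := by
          rw [Finset.sum_range_succ]; ring
  have hgeo : ∀ n : ℕ, ∑ k ∈ Finset.range n, c^k ≤ 1 / (1 - c) := by
    intro n
    rw [le_div_iff₀ (by linarith)]
    have h := geom_sum_mul c n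
    have hpn : 0 ≤ c^n := pow_nonneg hc0 n
    nlinarith [h]
  set M : ℝ := 1 + D * (1 / (1 - c)) with hMdef
  have hM0 : 0 ≤ M := by
    have h1c : (0:ℝ) < 1 - c := by linarith
    have : 0 ≤ D * (1 / (1 - c)) := mul_nonneg hD0 (by positivity)
    rw [hMdef]; linarith
  have hLipM : ∀ n, ∀ x ∈ Set.Icc (0:ℝ) 1, ∀ y ∈ Set.Icc (0:ℝ) 1,
      |fseq n x - fseq n y| ≤ M * |x - y| := by
    intro n x hx y hy
    refine (hLipSum n x hx y hy).trans ?_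
    apply mul_le_mul_of_nonneg_right _ (abs_nonneg _)
    have h2 := mul_le_mul_of_nonneg_left (hgeo n) hD0
    rw [hMdef]; linarith
  -- Cauchy and the limit function
  have hcauchy : ∀ x ∈ Set.Icc (0:ℝ) 1, ∃ l, Tendsto (fun n => fseq n x) atTop (𝓝 l) := by
    intro x hx
    apply cauchySeq_tendsto_of_complete
    apply cauchySeq_of_le_geometric c D hc1
    intro n
    rw [Real.dist_eq, abs_sub_comm]
    exact hsup n x hx
  set F : ℝ → ℝ := fun x => limUnder atTop (fun n => fseq n x) with hFdef
  have htend : ∀ x ∈ Set.Icc (0:ℝ) 1, Tendsto (fun n => fseq n x) atTop (𝓝 (F x)) := by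
    intro x hx
    obtain ⟨l, hl⟩ := hcauchy x hx
    have : F x = l := hl.limUnder_eq
    rw [this]; exact hl
  have hF0 : F 0 = 0 := by
    refine tendsto_nhds_unique (htend 0 h0mem) ?_
    simp only [hend0]
    exact tendsto_const_nhds
  have hF1 : F 1 = 1 := by
    refine tendsto_nhds_unique (htend 1 h1mem) ?_
    simp only [hend1]
    exact tendsto_const_nhds
  have hFlip : ∀ x ∈ Set.Icc (0:ℝ) 1, ∀ y ∈ Set.Icc (0:ℝ) 1,
      |F x - F y| ≤ M * |x - y| := by
    intro x hx y hy
    refine le_of_tendsto (((htend x hx).sub (htend y hy)).abs) ?_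
    exact Eventually.of_forall fun n => hLipM n x hx y hy
  have hFeq : ∀ x ∈ Set.Icc (0:ℝ) 1, F x = φ x * F (φ₁ x) + (1 - φ x) * F (φ₂ x) := by
    intro x hx
    have h1 : Tendsto (fun n => fseq (n+1) x) atTop (𝓝 (F x)) :=
      (htend x hx).comp (Filter.tendsto_add_atTop_nat 1)
    have h2 : Tendsto (fun n => φ x * fseq n (φ₁ x) + (1 - φ x) * fseq n (φ₂ x)) atTop
        (𝓝 (φ x * F (φ₁ x) + (1 - φ x) * F (φ₂ x))) :=
      ((htend _ (hφ₁maps x hx)).const_mul _).add ((htend _ (hφ₂maps x hx)).const_mul _)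
    have h3 : (fun n => fseq (n+1) x)
        = fun n => φ x * fseq n (φ₁ x) + (1 - φ x) * fseq n (φ₂ x) := by
      funext n; rw [hiter n]
    rw [h3] at h1
    exact tendsto_nhds_unique h1 h2
  refine ⟨F, ⟨⟨M, hFlip⟩, hF0, hF1, hFeq⟩, ?_⟩
  -- uniqueness
  rintro g ⟨⟨Kg, hg⟩, hg0, hg1, hgeq⟩ x hx
  have hhex : ∃ K : ℝ, ∀ x ∈ Set.Icc (0:ℝ) 1, ∀ y ∈ Set.Icc (0:ℝ) 1,
      |(fun t => g t - F t) x - (fun t => g t - F t) y| ≤ K * |x - y| := by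
    refine ⟨Kg + M, fun x hx y hy => ?_⟩
    have e : (g x - F x) - (g y - F y) = (g x - g y) - (F x - F y) := by ring
    simp only [e]
    calc |(g x - g y) - (F x - F y)| ≤ |g x - g y| + |F x - F y| := abs_sub _ _
      _ ≤ Kg * |x - y| + M * |x - y| := add_le_add (hg x hx y hy) (hFlip x hx y hy)
      _ = (Kg + M) * |x - y| := by ring
  obtain ⟨hL0, hLlip⟩ := lipConst_spec (fun t => g t - F t) hhex
  set L := lipConst (fun t => g t - F t) with hLdef
  have hcontr2 : ∀ x ∈ Set.Icc (0:ℝ) 1, ∀ y ∈ Set.Icc (0:ℝ) 1,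
      |(fun t => g t - F t) x - (fun t => g t - F t) y| ≤ (c * L) * |x - y| := by
    intro x hx y hy
    have h := keyA g F L hL0 (by rw [hg0, hF0]) (by rw [hg1, hF1])
      (fun u hu v hv => hLlip u hu v hv) x hx y hy
    have eg : T g x = g x := (hgeq x hx).symm
    have eF : T F x = F x := (hFeq x hx).symm
    have eg' : T g y = g y := (hgeq y hy).symm
    have eF' : T F y = F y := (hFeq y hy).symm
    rw [eg, eF, eg', eF'] at h
    exact h
  have hle : L ≤ c * L := lipConst_le' _ (c * L) (by positivity) hcontr2
  have hL00 : L = 0 := by nlinarith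
  have := hLlip x hx 0 h0mem
  rw [hL00] at this
  simp only [zero_mul] at this
  have h0 : g 0 - F 0 = 0 := by rw [hg0, hF0]; ring
  have : |(g x - F x) - (g 0 - F 0)| ≤ 0 := this
  rw [h0, sub_zero] at this
  have := abs_nonpos_iff.mp this
  linarith [this]
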